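/- arXiv:1504.04278 — 2 statements merged into one kernel-verified Lean document; each statement's English description precedes it below -/
import Mathlib

section
/- For t ≥ 5, every uniquely C_t-saturated graph that is not complete contains a cycle of length at most t+1 (i.e., has girth at most t+1). -/
open SimpleGraph

/-- `G` has a cycle on `t` vertices (a cycle of length `t`). -/
def HasCycleOn {V : Type*} (G : SimpleGraph V) (t : ℕ) : Prop :=
  ∃ (v : V) (w : G.Walk v v), w.IsCycle ∧ w.length = t

/-- `c` is the edge set of some cycle on `t` vertices in `G`. -/
def IsCtEdgeSet {V : Type*} (G : SimpleGraph V) (t : ℕ) (c : Set (Sym2 V)) : Prop :=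
  ∃ (v : V) (w : G.Walk v v), w.IsCycle ∧ w.length = t ∧ {e | e ∈ w.edges} = c

/-- `G` is uniquely `C_t`-saturated: it has no cycle on `t` vertices, and adding any
edge of the complement creates exactly one cycle on `t` vertices. -/
def UniquelyCSat {V : Type*} (G : SimpleGraph V) (t : ℕ) : Prop :=
  ¬ HasCycleOn G t ∧
    ∀ x y : V, x ≠ y → ¬ G.Adj x y →
      ∃! c : Set (Sym2 V), IsCtEdgeSet (G ⊔ fromEdgeSet {s(x, y)}) t c

/-!
Take a non-edge `xy`. Saturation gives a path `x v₁ v₂ … y` of length `t - 1` in `G`. The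
vertex `v₂` is joined to `x` either by an edge or, by saturation again, by a path of length
`t - 1 ≥ 4`; either way this path differs from `x v₁ v₂`, and two distinct `x`–`v₂` paths
contain a cycle of length at most the sum of their lengths, which is at most `t + 1`.
-/

namespace SimpleGraph.Walk

variable {V : Type*} {G : SimpleGraph V} {u x y : V}

lemma IsCycle.exists_isPath_of_snd_eq {c : G.Walk x x} (hc : c.IsCycle) (hy : c.snd = y) :
    ∃ p : G.Walk y x, p.IsPath ∧ p.length + 1 = c.length ∧ s(x, y) ∉ p.edges := by
  cases c with
  | nil => exact absurd hc not_isCycle_nil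
  | cons h q =>
    rw [snd_cons] at hy
    subst hy
    exact ⟨q, ((cons_isCycle_iff q h).mp hc).1, rfl, ((cons_isCycle_iff q h).mp hc).2⟩

lemma IsCycle.exists_isPath_of_mem_edges [DecidableEq V] {c : G.Walk u u} (hc : c.IsCycle)
    (he : s(x, y) ∈ c.edges) :
    ∃ p : G.Walk y x, p.IsPath ∧ p.length + 1 = c.length ∧ s(x, y) ∉ p.edges := by
  have hx := c.fst_mem_support_of_mem_edges he
  have hc' : (c.rotate x hx).IsCycle := hc.rotate hx
  have hy : y ∈ (c.rotate x hx).toSubgraph.neighborSet x := by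
    rw [Subgraph.mem_neighborSet, ← Subgraph.mem_edgeSet, mem_edges_toSubgraph]
    exact (c.rotate_edges x hx).mem_iff.mpr he
  rw [hc'.neighborSet_toSubgraph_endpoint] at hy
  rcases hy with hy | hy
  · simpa using hc'.exists_isPath_of_snd_eq hy.symm
  · simpa using hc'.reverse.exists_isPath_of_snd_eq ((snd_reverse _).trans hy.symm)

end SimpleGraph.Walk

section Saturation

variable {V : Type*} {G : SimpleGraph V} {t : ℕ} {x y : V}

lemma mem_edgeSet_of_mem_edgeSet_sup_edge {e : Sym2 V}
    (he : e ∈ (G ⊔ fromEdgeSet {s(x, y)}).edgeSet) (hne : e ≠ s(x, y)) : e ∈ G.edgeSet := by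
  simp_all [edgeSet_sup, edgeSet_fromEdgeSet]

lemma exists_isPath_of_hasCycleOn_sup_edge (hG : ¬ HasCycleOn G t)
    (h : HasCycleOn (G ⊔ fromEdgeSet {s(x, y)}) t) :
    ∃ p : G.Walk x y, p.IsPath ∧ p.length + 1 = t := by
  classical
  obtain ⟨v, c, hc, rfl⟩ := h
  by_cases he : s(x, y) ∈ c.edges
  · obtain ⟨p, hp, hlen, hpe⟩ := hc.exists_isPath_of_mem_edges he
    have hpG : ∀ e ∈ p.edges, e ∈ G.edgeSet := fun e hep =>
      mem_edgeSet_of_mem_edgeSet_sup_edge (p.edges_subset_edgeSet hep)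
        (ne_of_mem_of_not_mem hep hpe)
    exact ⟨(p.transfer G hpG).reverse, (hp.transfer hpG).reverse, by simpa using hlen⟩
  · have hcG : ∀ e ∈ c.edges, e ∈ G.edgeSet := fun e hec =>
      mem_edgeSet_of_mem_edgeSet_sup_edge (c.edges_subset_edgeSet hec)
        (ne_of_mem_of_not_mem hec he)
    exact absurd ⟨v, c.transfer G hcG, hc.transfer hcG, by simp⟩ hG

lemma UniquelyCSat.exists_isPath_of_not_adj (hG : UniquelyCSat G t) (hxy : x ≠ y)
    (hn : ¬ G.Adj x y) : ∃ p : G.Walk x y, p.IsPath ∧ p.length + 1 = t := by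
  obtain ⟨c, ⟨v, w, hw, hlen, -⟩, -⟩ := hG.2 x y hxy hn
  exact exists_isPath_of_hasCycleOn_sup_edge hG.1 ⟨v, w, hw, hlen⟩

end Saturation

theorem stmt_7_general {V : Type*} (G : SimpleGraph V) (t : ℕ) (ht : 5 ≤ t)
    (hG : UniquelyCSat G t) (hnc : G ≠ ⊤) :
    ∃ l : ℕ, l ≤ t + 1 ∧ HasCycleOn G l := by
  obtain ⟨x, y, hxy, hn⟩ := ne_top_iff_exists_not_adj.mp hnc
  obtain ⟨P, hP, hPlen⟩ := hG.exists_isPath_of_not_adj hxy hn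
  have hRlen : (P.take 2).length = 2 := by rw [Walk.take_length]; omega
  have hx2 : x ≠ P.getVert 2 := by
    intro h
    have := hP.getVert_injOn (x₁ := 0) (x₂ := 2) (by simp) (by simp only [Set.mem_ofPred_eq]; omega)
      (by simpa using h)
    omega
  obtain ⟨Q, hQ, hQlen, hQ2⟩ :
      ∃ Q : G.Walk x (P.getVert 2), Q.IsPath ∧ Q.length + 1 ≤ t ∧ Q.length ≠ 2 := by
    by_cases hadj : G.Adj x (P.getVert 2)
    · exact ⟨hadj.toWalk, by simp [hx2], by rw [hadj.length_toWalk]; omega, by simp⟩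
    · obtain ⟨Q, hQ, hQlen⟩ := hG.exists_isPath_of_not_adj hx2 hadj
      exact ⟨Q, hQ, hQlen.le, by omega⟩
  obtain ⟨w, -, -, c, hc, hclen⟩ := (hP.take 2).exists_isCycle_length_le_add_of_ne hQ
    (fun h => hQ2 (h ▸ hRlen))
  exact ⟨c.length, by omega, w, c, hc, rfl⟩

/-- For `t ≥ 5`, every non-complete uniquely `C_t`-saturated graph has girth at most
`t + 1`: it contains a cycle of length at most `t + 1`. -/
theorem stmt_7 {V : Type*} [Fintype V] (G : SimpleGraph V) (t : ℕ) (ht : 5 ≤ t)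
    (hG : UniquelyCSat G t) (hnc : G ≠ ⊤) :
    ∃ l : ℕ, l ≤ t + 1 ∧ HasCycleOn G l :=
  stmt_7_general G t ht hG hnc
end

section
/- For odd t ≥ 5, if F is a uniquely C_t-saturated graph having two blocks G' and G'' isomorphic to the same graph G sharing a cut-vertex x (with x corresponding to the same vertex of G in both copies), then for every vertex y of G other than x there is exactly one path on (t+1)/2 vertices in G with endpoints y and x. -/
open SimpleGraph

/-- The set `s` induces a block of `G`: a maximal set of vertices inducing a
connected subgraph with no cut-vertex. -/
def IsBlock {V : Type*} (G : SimpleGraph V) (s : Set V) : Prop :=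
  s.Nonempty ∧ (G.induce s).Connected ∧
    (∀ v ∈ s, (G.induce (s \ {v})).Preconnected) ∧
    ∀ u : Set V, s ⊆ u →
      ((G.induce u).Connected ∧ ∀ v ∈ u, (G.induce (u \ {v})).Preconnected) → u = s

/-- `G` is 2-connected: it has at least 3 vertices, is connected, and removing any
single vertex leaves a connected graph. -/
def TwoConnected {V : Type*} [Fintype V] (G : SimpleGraph V) : Prop :=
  3 ≤ Fintype.card V ∧ G.Connected ∧
    ∀ v : V, (G.induce ({v}ᶜ : Set V)).Connected

/-!
Write `y₁, y₂` for the two copies of `y`. They are not adjacent, so `F + y₁y₂` has a unique `C_t`,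
and since `F` has none, it uses the edge `y₁y₂`. The rest of it is a `y₂`–`y₁` path in `F`; a block
contains every path between two of its vertices, so this path passes through the cut-vertex `x`
and its two halves are the images of `y`–`x₀` paths `p`, `q` of `G`, with `|p| + |q| = t - 1`.
Gluing `q` into the first copy and `p` into the second gives another `C_t` through `y₁y₂`, so by
uniqueness `p = q` and `|p| = (t - 1) / 2`; in the same way, any `y`–`x₀` path of that length glued
with `q` yields a `C_t` through `y₁y₂` and so equals `p`.
-/

namespace SimpleGraph.Walk

variable {V W : Type*} {G : SimpleGraph V} {F : SimpleGraph W}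

theorem IsPath.exists_eq_cons_of_mem_edges {u v w : V} {p : G.Walk u v} (hp : p.IsPath)
    (he : s(u, w) ∈ p.edges) : ∃ (h : G.Adj u w) (q : G.Walk w v), p = cons h q := by
  have hnil : ¬ p.Nil := edges_eq_nil.not.mp (List.ne_nil_of_mem he)
  obtain rfl := hp.eq_snd_of_mem_edges he
  exact ⟨_, _, (cons_tail_eq p hnil).symm⟩

theorem IsPath.eq_of_edges_subset {u v : V} {p q : G.Walk u v} (hp : p.IsPath) (hq : q.IsPath)
    (h : p.edges ⊆ q.edges) : p = q := by
  induction p with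
  | nil => exact ((isPath_iff_nil.mp hq).eq_nil).symm
  | @cons u w v huw p ih =>
    have hmem : s(u, w) ∈ q.edges := h (by simp)
    obtain ⟨huw', q, rfl⟩ := hq.exists_eq_cons_of_mem_edges hmem
    congr
    refine ih hp.of_cons hq.of_cons fun e he => ?_
    rcases List.mem_cons.mp (h (List.mem_cons_of_mem _ he)) with rfl | he'
    · exact absurd (p.fst_mem_support_of_mem_edges he) ((cons_isPath_iff _ _).mp hp).2
    · exact he'

theorem IsCycle.exists_cons_eq_of_mem_edges {u v : V} {c : G.Walk u u} (hc : c.IsCycle)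
    (he : s(u, v) ∈ c.edges) :
    ∃ (h : G.Adj u v) (q : G.Walk v u), (cons h q).IsCycle ∧ (cons h q).edgeSet = c.edgeSet ∧
      (cons h q).length = c.length := by
  cases c with
  | nil => exact absurd rfl hc.ne_nil
  | @cons _ w _ huw p =>
    rcases List.mem_cons.mp he with he | he
    · obtain rfl : v = w := by
        rcases Sym2.eq_iff.mp he with ⟨-, h⟩ | ⟨rfl, rfl⟩
        · exact h
        · exact absurd rfl huw.ne
      exact ⟨huw, p, hc, rfl, rfl⟩
    · obtain ⟨h, q, hq⟩ := ((cons_isCycle_iff _ _).mp hc).1.reverse.exists_eq_cons_of_mem_edges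
        (w := v) (by rwa [edges_reverse, List.mem_reverse])
      have hrev : (cons huw p).reverse = cons h (q.append (cons huw.symm nil)) := by
        rw [reverse_cons, hq, cons_append]
      refine ⟨h, q.append (cons huw.symm nil), ?_, ?_, ?_⟩
      · exact hrev ▸ hc.reverse
      · rw [← hrev, edgeSet_reverse]
      · rw [← hrev, length_reverse]

theorem IsPath.append {u v w : V} {p : G.Walk u v} {q : G.Walk v w} (hp : p.IsPath)
    (hq : q.IsPath) (h : ∀ z ∈ p.support, z ∈ q.support → z = v) : (p.append q).IsPath := by
  have hv : v ∉ q.support.tail := by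
    have := hq.support_nodup
    rw [← cons_tail_support] at this
    exact (List.nodup_cons.mp this).1
  rw [isPath_def, support_append]
  exact hp.support_nodup.append hq.support_nodup.tail fun z hzp hzq =>
    hv (h z hzp (List.mem_of_mem_tail hzq) ▸ hzq)

theorem IsPath.exists_walk_to_endpoint_avoiding [DecidableEq V] {u v w z : V} {p : G.Walk u v}
    (hp : p.IsPath) (hw : w ∈ p.support) (hwz : w ≠ z) :
    ∃ c, (c = u ∨ c = v) ∧ ∃ q : G.Walk w c, z ∉ q.support ∧ ∀ a ∈ q.support, a ∈ p.support := by
  by_cases hz : z ∈ (p.takeUntil w hw).support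
  · have hdisj := hp.support_nodup
    rw [← p.take_spec hw, support_append] at hdisj
    refine ⟨v, Or.inr rfl, p.dropUntil w hw, fun hzd => ?_,
      fun a ha => p.support_dropUntil_subset_support hw ha⟩
    rw [← cons_tail_support] at hzd
    rcases List.mem_cons.mp hzd with rfl | hzd
    · exact hwz rfl
    · exact List.disjoint_of_nodup_append hdisj hz hzd
  · refine ⟨u, Or.inl rfl, (p.takeUntil w hw).reverse, by simpa using hz, fun a ha => ?_⟩
    rw [support_reverse, List.mem_reverse] at ha
    exact p.support_takeUntil_subset_support hw ha

theorem exists_map_eq_of_forall_mem_range (φ : G ↪g F) {u v : W} (p : F.Walk u v)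
    (hp : ∀ z ∈ p.support, z ∈ Set.range φ) {a b : V} (ha : φ a = u) (hb : φ b = v) :
    ∃ p' : G.Walk a b, p'.map φ.toHom = p.copy ha.symm hb.symm := by
  induction p generalizing a with
  | nil =>
    obtain rfl := φ.injective (ha.trans hb.symm)
    exact ⟨nil, by simp⟩
  | @cons u w v huw p ih =>
    obtain ⟨c, rfl⟩ := hp w (by simp)
    obtain ⟨p', hp'⟩ := ih (fun z hz => hp z (List.mem_cons_of_mem _ hz)) rfl hb
    subst ha hb
    refine ⟨cons (φ.map_adj_iff.mp huw) p', ?_⟩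
    simp [hp']

end SimpleGraph.Walk

section Blocks

variable {W : Type*} {F : SimpleGraph W} {s : Set W}

theorem IsBlock.preconnected_induce_diff_singleton (hs : IsBlock F s) (v : W) :
    (F.induce (s \ {v})).Preconnected := by
  by_cases hv : v ∈ s
  · exact hs.2.2.1 v hv
  · rw [Set.sdiff_singleton_eq_self hv]
    exact hs.2.1.preconnected

/-- Adding a path with both ends in a block creates no cut-vertex, so by maximality the path
already lies in the block. -/
theorem IsBlock.mem_of_mem_support_of_isPath (hs : IsBlock F s) {a b : W} (ha : a ∈ s)
    (hb : b ∈ s) (hab : a ≠ b) {p : F.Walk a b} (hp : p.IsPath) : ∀ z ∈ p.support, z ∈ s := by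
  classical
  set u := s ∪ {z | z ∈ p.support}
  suffices hu : u = s from fun z hz => hu ▸ Or.inr hz
  refine hs.2.2.2 u Set.subset_union_left
    ⟨induce_union_connected hs.2.1.preconnected p.connected_induce_support.preconnected
      ⟨a, ha, p.start_mem_support⟩, fun v _ => ?_⟩
  obtain ⟨α, hαs, hαv⟩ : ∃ α ∈ s, α ≠ v := by
    by_cases hav : a = v
    · exact ⟨b, hb, hav ▸ hab.symm⟩
    · exact ⟨a, ha, hav⟩
  have hα : α ∈ s \ {v} := ⟨hαs, hαv⟩
  have hαu : α ∈ u \ {v} := ⟨Or.inl hαs, hαv⟩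
  refine (induce_connected_of_patches α hαu fun {w} hw => ?_).preconnected
  obtain ⟨hwu, hwv : w ≠ v⟩ := hw
  rcases hwu with hws | hwp
  · exact ⟨s \ {v}, Set.sdiff_subset_sdiff_left Set.subset_union_left, hα, ⟨hws, hwv⟩,
      hs.preconnected_induce_diff_singleton v _ _⟩
  · obtain ⟨c, hc, q, hvq, hqp⟩ := hp.exists_walk_to_endpoint_avoiding hwp hwv
    have hcs : c ∈ s := hc.elim (· ▸ ha) (· ▸ hb)
    have hcv : c ≠ v := fun h => hvq (h ▸ q.end_mem_support)
    have hsub : (s \ {v}) ∪ {z | z ∈ q.support} ⊆ u \ {v} :=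
      Set.union_subset (Set.sdiff_subset_sdiff_left Set.subset_union_left)
        fun z hz => ⟨Or.inr (hqp z hz), fun h => hvq (h ▸ hz)⟩
    have hconn := induce_union_connected (hs.preconnected_induce_diff_singleton v)
      q.connected_induce_support.preconnected ⟨c, ⟨hcs, hcv⟩, q.end_mem_support⟩
    exact ⟨_, hsub, Or.inl hα, Or.inr q.start_mem_support, hconn.preconnected _ _⟩

theorem exists_isPath_of_preconnected_induce (hs : (F.induce s).Preconnected) {a b : W}
    (ha : a ∈ s) (hb : b ∈ s) :
    ∃ p : F.Walk a b, p.IsPath ∧ ∀ z ∈ p.support, z ∈ s := by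
  classical
  obtain ⟨p⟩ := hs ⟨a, ha⟩ ⟨b, hb⟩
  refine ⟨p.bypass.map (Embedding.induce s).toHom,
    p.bypass_isPath.map Subtype.val_injective, fun z hz => ?_⟩
  obtain ⟨z, -, rfl⟩ := List.mem_map.mp (Walk.support_map _ _ ▸ hz)
  exact z.2

/-- Take the first vertex `w` of the walk in `s₂`; the part of the walk up to `w` followed by a
path inside `s₂` from `w` to `x` is a path between two vertices of the block `s₁`, hence lies in
`s₁`, forcing `w ∈ s₁ ∩ s₂ = {x}`. -/
theorem IsBlock.mem_support_of_inter_eq_singleton {s₁ s₂ : Set W} (hs₁ : IsBlock F s₁)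
    (hs₂ : (F.induce s₂).Preconnected) {x : W} (hcap : s₁ ∩ s₂ = {x}) {a b : W} (ha : a ∈ s₁)
    (hb : b ∈ s₂) (p : F.Walk a b) : x ∈ p.support := by
  classical
  by_contra hx
  have hxs : x ∈ s₁ ∩ s₂ := hcap ▸ rfl
  obtain ⟨w, hw, hwp, hfirst⟩ := p.exists_mem_support_forall_mem_support_imp_eq
    {z ∈ p.support.toFinset | z ∈ s₂} ⟨b, by simp [hb]⟩
  simp only [Finset.mem_filter, List.mem_toFinset] at hw hfirst
  have hwx : w ≠ x := fun h => hx (h ▸ hwp)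
  set r := (p.takeUntil w hwp).bypass
  obtain ⟨q, hq, hqs⟩ := exists_isPath_of_preconnected_induce hs₂ hw.2 hxs.2
  have hrq : (r.append q).IsPath := by
    refine (p.takeUntil w hwp).bypass_isPath.append hq fun z hzr hzq => ?_
    have hz := (p.takeUntil w hwp).support_bypass_subset_support hzr
    exact hfirst z ⟨p.support_takeUntil_subset_support hwp hz, hqs z hzq⟩ hz
  have hws₁ := hs₁.mem_of_mem_support_of_isPath ha hxs.1 (fun h => hx (h ▸ p.start_mem_support))
    hrq w (by simp [Walk.support_append])
  exact hwx (hcap ▸ ⟨hws₁, hw.2⟩ : w ∈ ({x} : Set W))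

end Blocks

theorem IsCtEdgeSet.exists_isPath_of_not_hasCycleOn {W : Type*} {F : SimpleGraph W} {t : ℕ}
    {a b : W} {c : Set (Sym2 W)} (hF : ¬ HasCycleOn F t)
    (hc : IsCtEdgeSet (F ⊔ fromEdgeSet {s(a, b)}) t c) :
    ∃ q : F.Walk b a, q.IsPath ∧ q.length + 1 = t ∧ c = insert s(a, b) q.edgeSet := by
  classical
  obtain ⟨v, w, hw, rfl, rfl⟩ := hc
  have hF' : ∀ e ∈ (F ⊔ fromEdgeSet {s(a, b)}).edgeSet, e ≠ s(a, b) → e ∈ F.edgeSet := by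
    intro e he hne
    rw [edgeSet_sup, edgeSet_fromEdgeSet] at he
    exact he.resolve_right fun h => hne h.1
  have hmem : s(a, b) ∈ w.edges := by
    by_contra hab
    have hwF : ∀ e ∈ w.edges, e ∈ F.edgeSet := fun e he =>
      hF' e (w.edges_subset_edgeSet he) (ne_of_mem_of_not_mem he hab)
    exact hF ⟨v, w.transfer F hwF, hw.transfer hwF, by rw [Walk.length_transfer]⟩
  have ha : a ∈ w.support := w.fst_mem_support_of_mem_edges hmem
  obtain ⟨h, q, hcyc, hset, hlen⟩ := (hw.rotate ha).exists_cons_eq_of_mem_edges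
    ((w.rotate_edges a ha).mem_iff.mpr hmem)
  obtain ⟨hq, hab⟩ := (Walk.cons_isCycle_iff _ _).mp hcyc
  have hqF : ∀ e ∈ q.edges, e ∈ F.edgeSet := fun e he =>
    hF' e (q.edges_subset_edgeSet he) (ne_of_mem_of_not_mem he hab)
  refine ⟨q.transfer F hqF, hq.transfer hqF, ?_, ?_⟩
  · rw [Walk.length_transfer, ← Walk.length_cons h, hlen, Walk.length_rotate]
  · rw [Walk.edgeSet_transfer, ← Walk.edgeSet_cons h, hset]
    ext e
    exact (w.rotate_edges a ha).mem_iff.symm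

section Gluing

variable {V W : Type*} {G : SimpleGraph V} {F : SimpleGraph W} (φ₁ φ₂ : G ↪g F) {x₀ y : V}

def MeetsExactlyAt (x₀ : V) : Prop := ∀ a b, φ₁ a = φ₂ b ↔ a = x₀ ∧ b = x₀

/-- The edge set of the closed walk `φ₁ y ⟶ φ₁ x₀ = φ₂ x₀ ⟶ φ₂ y ⟶ φ₁ y` that follows `p` in
the first copy of `G`, `q` in the second one, and closes up with the new edge. -/
def gluedEdgeSet (p q : G.Walk y x₀) : Set (Sym2 W) :=
  insert s(φ₁ y, φ₂ y) ((p.map φ₁.toHom).edgeSet ∪ (q.map φ₂.toHom).edgeSet)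

variable {φ₁ φ₂}

theorem MeetsExactlyAt.range_inter_range_eq (hmeet : MeetsExactlyAt φ₁ φ₂ x₀) :
    Set.range φ₁ ∩ Set.range φ₂ = {φ₁ x₀} := by
  ext z
  constructor
  · rintro ⟨⟨a, rfl⟩, b, hb⟩
    rw [((hmeet a b).mp hb.symm).1]
    rfl
  · rintro rfl
    exact ⟨⟨x₀, rfl⟩, x₀, ((hmeet x₀ x₀).mpr ⟨rfl, rfl⟩).symm⟩

theorem meetsExactlyAt_of_range_inter_range_eq (hcap : Set.range φ₁ ∩ Set.range φ₂ = {φ₁ x₀})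
    (hx : φ₁ x₀ = φ₂ x₀) : MeetsExactlyAt φ₁ φ₂ x₀ := by
  refine fun a b => ⟨?_, ?_⟩
  · intro h
    have ha : φ₁ a ∈ Set.range φ₁ ∩ Set.range φ₂ := ⟨⟨a, rfl⟩, b, h.symm⟩
    rw [hcap, Set.mem_singleton_iff] at ha
    exact ⟨φ₁.injective ha, φ₂.injective (h.symm.trans (ha.trans hx))⟩
  · rintro ⟨rfl, rfl⟩
    exact hx

theorem isCtEdgeSet_gluedEdgeSet (hmeet : MeetsExactlyAt φ₁ φ₂ x₀)
    (hy : y ≠ x₀) {p q : G.Walk y x₀} (hp : p.IsPath) (hq : q.IsPath) :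
    IsCtEdgeSet (F ⊔ fromEdgeSet {s(φ₁ y, φ₂ y)}) (p.length + q.length + 1)
      (gluedEdgeSet φ₁ φ₂ p q) := by
  have hx : φ₁ x₀ = φ₂ x₀ := (hmeet x₀ x₀).mpr ⟨rfl, rfl⟩
  have h₁ : φ₁ y ∉ Set.range φ₂ := fun ⟨b, hb⟩ => hy ((hmeet y b).mp hb.symm).1
  have h₂ : φ₂ y ∉ Set.range φ₁ := fun ⟨a, ha⟩ => hy ((hmeet a y).mp ha).2
  set A := p.map φ₁.toHom
  set B := ((q.map φ₂.toHom).reverse).copy hx.symm rfl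
  have hA : ∀ z ∈ A.support, z ∈ Set.range φ₁ := by simp [A]
  have hB : ∀ z ∈ B.support, z ∈ Set.range φ₂ := by simp [B]
  have hAB : (A.append B).IsPath := by
    refine (hp.map φ₁.injective).append ?_ fun z hzA hzB => ?_
    · rw [Walk.isPath_copy]
      exact (hq.map (f := φ₂.toHom) φ₂.injective).reverse
    · have hz : z ∈ Set.range φ₁ ∩ Set.range φ₂ := ⟨hA z hzA, hB z hzB⟩
      rwa [hmeet.range_inter_range_eq] at hz
  have hadj : (F ⊔ fromEdgeSet {s(φ₁ y, φ₂ y)}).Adj (φ₂ y) (φ₁ y) := by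
    rw [sup_adj, fromEdgeSet_adj]
    exact Or.inr ⟨Sym2.eq_swap, fun h => h₂ ⟨y, h.symm⟩⟩
  refine ⟨φ₂ y, Walk.cons hadj ((A.append B).mapLe le_sup_left), ?_, ?_, ?_⟩
  · refine (Walk.cons_isCycle_iff _ _).mpr ⟨hAB.mapLe _, fun he => ?_⟩
    rw [Walk.edges_mapLe_eq_edges, Walk.edges_append, List.mem_append] at he
    rcases he with he | he
    · exact h₂ (hA _ (A.fst_mem_support_of_mem_edges he))
    · exact h₁ (hB _ (B.snd_mem_support_of_mem_edges he))
  · simp only [Walk.length_cons, Walk.length_append, A, B, Walk.length_copy,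
      Walk.length_reverse, Walk.length_map]
  · show Walk.edgeSet _ = _
    simp only [Walk.edgeSet_cons, Walk.edgeSet_mapLe_eq_edgeSet, Walk.edgeSet_append, A, B,
      Walk.edgeSet_copy, Walk.edgeSet_reverse, gluedEdgeSet, Sym2.eq_swap]

theorem MeetsExactlyAt.isDiag_of_sym2_map_eq_map (hmeet : MeetsExactlyAt φ₁ φ₂ x₀) {e e' : Sym2 V}
    (h : Sym2.map φ₁ e = Sym2.map φ₂ e') : e.IsDiag := by
  induction e using Sym2.ind with | h a b => ?_
  induction e' using Sym2.ind with | h a' b' => ?_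
  rw [Sym2.map_mk, Sym2.map_mk, Sym2.eq_iff] at h
  rw [Sym2.mk_isDiag_iff]
  rcases h with ⟨ha, hb⟩ | ⟨ha, hb⟩
  · exact ((hmeet a a').mp ha).1.trans ((hmeet b b').mp hb).1.symm
  · exact ((hmeet a b').mp ha).1.trans ((hmeet b a').mp hb).1.symm

theorem eq_of_gluedEdgeSet_subset (hmeet : MeetsExactlyAt φ₁ φ₂ x₀) (hy : y ≠ x₀)
    {p q p' q' : G.Walk y x₀} (hp : p.IsPath) (hp' : p'.IsPath)
    (h : gluedEdgeSet φ₁ φ₂ p q ⊆ gluedEdgeSet φ₁ φ₂ p' q') : p = p' := by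
  refine hp.eq_of_edges_subset hp' fun e he => ?_
  have he₁ : Sym2.map φ₁ e ∈ (p.map φ₁.toHom).edgeSet := by
    rw [Walk.edgeSet_map]
    exact ⟨e, he, rfl⟩
  have hmem := h (Set.mem_insert_of_mem _ (Or.inl he₁))
  simp only [gluedEdgeSet, Walk.edgeSet_map, Set.mem_insert_iff, Set.mem_union,
    Set.mem_image] at hmem
  rcases hmem with hy' | ⟨e', he', hee'⟩ | ⟨e', -, hee'⟩
  · obtain ⟨a, -, ha⟩ := Sym2.mem_map.mp (hy' ▸ Sym2.mem_mk_right _ _ : φ₂ y ∈ Sym2.map φ₁ e)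
    exact absurd ((hmeet a y).mp ha).2 hy
  · exact Sym2.map.injective φ₁.injective hee' ▸ he'
  · exact absurd (hmeet.isDiag_of_sym2_map_eq_map hee'.symm)
      (G.not_isDiag_of_mem_edgeSet (p.edges_subset_edgeSet he))

theorem not_adj_apply_of_ne (hs₁ : IsBlock F (Set.range φ₁))
    (hs₂ : (F.induce (Set.range φ₂)).Preconnected)
    (hmeet : MeetsExactlyAt φ₁ φ₂ x₀) (hy : y ≠ x₀) : ¬ F.Adj (φ₁ y) (φ₂ y) := by
  intro hadj
  have := hs₁.mem_support_of_inter_eq_singleton hs₂ (hmeet.range_inter_range_eq)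
    ⟨y, rfl⟩ ⟨y, rfl⟩ (Walk.cons hadj Walk.nil)
  simp only [Walk.support_cons, Walk.support_nil, List.mem_cons, List.not_mem_nil, or_false] at this
  rcases this with h | h
  · exact hy (φ₁.injective h).symm
  · exact hy ((hmeet x₀ y).mp h).2

/-- A `C_t` through the new edge runs through the cut-vertex, and the two halves lie in the two
blocks. -/
theorem exists_gluedEdgeSet_eq (hs₁ : IsBlock F (Set.range φ₁)) (hs₂ : IsBlock F (Set.range φ₂))
    (hmeet : MeetsExactlyAt φ₁ φ₂ x₀) (hy : y ≠ x₀) {t : ℕ} {c : Set (Sym2 W)}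
    (hF : ¬ HasCycleOn F t) (hc : IsCtEdgeSet (F ⊔ fromEdgeSet {s(φ₁ y, φ₂ y)}) t c) :
    ∃ p q : G.Walk y x₀, p.IsPath ∧ q.IsPath ∧ p.length + q.length + 1 = t ∧
      c = gluedEdgeSet φ₁ φ₂ p q := by
  classical
  have hx : φ₁ x₀ = φ₂ x₀ := (hmeet x₀ x₀).mpr ⟨rfl, rfl⟩
  obtain ⟨r, hr, rfl, rfl⟩ := hc.exists_isPath_of_not_hasCycleOn hF
  have hxr : φ₂ x₀ ∈ r.support := by
    have := hs₁.mem_support_of_inter_eq_singleton hs₂.2.1.preconnected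
      (hmeet.range_inter_range_eq) ⟨y, rfl⟩ ⟨y, rfl⟩ r.reverse
    rwa [Walk.support_reverse, List.mem_reverse, hx] at this
  set r₂ := r.takeUntil _ hxr
  set r₁ := (r.dropUntil _ hxr).reverse
  have hr₂ : r₂.IsPath := hr.takeUntil hxr
  have hr₁ : r₁.IsPath := (hr.dropUntil hxr).reverse
  obtain ⟨q, hq⟩ := r₂.exists_map_eq_of_forall_mem_range φ₂
    (hs₂.mem_of_mem_support_of_isPath ⟨y, rfl⟩ ⟨x₀, rfl⟩ (φ₂.injective.ne hy) hr₂) rfl rfl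
  obtain ⟨p, hp⟩ := r₁.exists_map_eq_of_forall_mem_range φ₁
    (hs₁.mem_of_mem_support_of_isPath ⟨y, rfl⟩ ⟨x₀, hx⟩ (fun h => hy ((hmeet y x₀).mp h).1) hr₁)
    rfl hx
  refine ⟨p, q, ?_, ?_, ?_, ?_⟩
  · rw [← Walk.isPath_map_iff_of_injective (f := φ₁.toHom) φ₁.injective, hp, Walk.isPath_copy]
    exact hr₁
  · rw [← Walk.isPath_map_iff_of_injective (f := φ₂.toHom) φ₂.injective, hq, Walk.isPath_copy]
    exact hr₂
  · have hlen : r₂.length + (r.dropUntil _ hxr).length = r.length := by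
      rw [← Walk.length_append]
      exact congrArg Walk.length (r.take_spec hxr)
    rw [← Walk.length_map φ₁.toHom, ← Walk.length_map φ₂.toHom q, hp, hq, Walk.length_copy,
      Walk.length_copy, Walk.length_reverse]
    omega
  · rw [gluedEdgeSet, hp, hq, Walk.edgeSet_copy, Walk.edgeSet_copy, Walk.edgeSet_reverse,
      Set.union_comm, ← Walk.edgeSet_append, r.take_spec hxr]

end Gluing

theorem range_induce_comp {V W : Type*} {G : SimpleGraph V} {F : SimpleGraph W} {s : Set W}
    (e : G ≃g F.induce s) : Set.range ((Embedding.induce s).comp e.toEmbedding) = s := by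
  ext z
  constructor
  · rintro ⟨a, rfl⟩
    exact (e a).2
  · intro hz
    exact ⟨e.symm ⟨z, hz⟩, by simp⟩

theorem stmt_18_general {W V : Type*} (F : SimpleGraph W)
    (G : SimpleGraph V) (t : ℕ)
    (hF : UniquelyCSat F t)
    (s₁ s₂ : Set W) (hs₁ : IsBlock F s₁) (hs₂ : IsBlock F s₂)
    (x : W) (hcap : s₁ ∩ s₂ = {x})
    (x₀ : V) (e₁ : G ≃g F.induce s₁) (e₂ : G ≃g F.induce s₂)
    (he₁ : ((e₁ x₀ : s₁) : W) = x) (he₂ : ((e₂ x₀ : s₂) : W) = x) :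
    ∀ y : V, y ≠ x₀ →
      ∃! p : G.Walk y x₀, p.IsPath ∧ p.length = (t + 1) / 2 - 1 := by
  intro y hy
  set φ₁ := (Embedding.induce s₁).comp e₁.toEmbedding
  set φ₂ := (Embedding.induce s₂).comp e₂.toEmbedding
  rw [← range_induce_comp e₁] at hs₁ hcap
  rw [← range_induce_comp e₂] at hs₂ hcap
  have hmeet : MeetsExactlyAt φ₁ φ₂ x₀ := meetsExactlyAt_of_range_inter_range_eq
    (hcap.trans (congrArg _ he₁.symm)) (he₁.trans he₂.symm)
  obtain ⟨c, hc, huniq⟩ := hF.2 (φ₁ y) (φ₂ y) (fun h => hy ((hmeet y y).mp h).1)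
    (not_adj_apply_of_ne hs₁ hs₂.2.1.preconnected hmeet hy)
  obtain ⟨p, q, hp, hq, rfl, rfl⟩ := exists_gluedEdgeSet_eq hs₁ hs₂ hmeet hy hF.1 hc
  have hglued {p' q' : G.Walk y x₀} (hp' : p'.IsPath) (hq' : q'.IsPath)
      (hlen : p'.length + q'.length = p.length + q.length) :
      gluedEdgeSet φ₁ φ₂ p' q' = gluedEdgeSet φ₁ φ₂ p q :=
    huniq _ (hlen ▸ isCtEdgeSet_gluedEdgeSet hmeet hy hp' hq')
  obtain rfl : q = p := eq_of_gluedEdgeSet_subset hmeet hy hq hp (hglued hq hp (add_comm _ _)).le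
  refine ⟨q, ⟨hq, by omega⟩, fun p' ⟨hp', hlen⟩ => ?_⟩
  exact eq_of_gluedEdgeSet_subset hmeet hy hp' hq (hglued hp' hq (by omega)).le

/-- For odd `t ≥ 5`: if a uniquely `C_t`-saturated graph `F` has two distinct blocks,
both isomorphic to a 2-connected graph `G`, meeting exactly in a cut-vertex `x` that
corresponds to the same vertex `x₀` of `G` under both isomorphisms, then every vertex
`y ≠ x₀` of `G` is joined to `x₀` by exactly one path on `(t+1)/2` vertices in `G`. -/
theorem stmt_18 {W V : Type*} [Fintype W] [Fintype V] (F : SimpleGraph W)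
    (G : SimpleGraph V) (t : ℕ) (ht : 5 ≤ t) (htodd : Odd t)
    (hF : UniquelyCSat F t) (hG2 : TwoConnected G)
    (s₁ s₂ : Set W) (hs₁ : IsBlock F s₁) (hs₂ : IsBlock F s₂) (hne : s₁ ≠ s₂)
    (x : W) (hcap : s₁ ∩ s₂ = {x})
    (hcut : ¬ (F.induce ({x}ᶜ : Set W)).Connected)
    (x₀ : V) (e₁ : G ≃g F.induce s₁) (e₂ : G ≃g F.induce s₂)
    (he₁ : ((e₁ x₀ : s₁) : W) = x) (he₂ : ((e₂ x₀ : s₂) : W) = x) :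
    ∀ y : V, y ≠ x₀ →
      ∃! p : G.Walk y x₀, p.IsPath ∧ p.length = (t + 1) / 2 - 1 :=
  stmt_18_general F G t hF s₁ s₂ hs₁ hs₂ x hcap x₀ e₁ e₂ he₁ he₂
end
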